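/- arXiv:2209.12315 — 2 statements merged into one kernel-verified Lean document; each statement's English description precedes it below -/
import Mathlib

section
/- Let G be a finite simple graph and let k be an odd positive integer. Then tree-α(G^k) ≤ tree-α(G). -/
open SimpleGraph

variable {V : Type*}

/-- The `k`-th power of a graph: distinct vertices are adjacent iff their distance is at most `k`. -/
def SimpleGraph.power (G : SimpleGraph V) (k : ℕ) : SimpleGraph V where
  Adj u v := u ≠ v ∧ G.Reachable u v ∧ G.dist u v ≤ k
  symm := by
    constructor
    rintro u v ⟨h1, h2, h3⟩
    exact ⟨h1.symm, h2.symm, by rwa [SimpleGraph.dist_comm]⟩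
  loopless := ⟨fun u h => h.1 rfl⟩

/-- A set of vertices is independent if it is pairwise non-adjacent. -/
def SimpleGraph.IsIndepSetOn (G : SimpleGraph V) (s : Set V) : Prop :=
  s.Pairwise fun u v => ¬ G.Adj u v

/-- The independence number of the subgraph of `G` induced by `X`. -/
noncomputable def indepNumOn (G : SimpleGraph V) (X : Set V) : ℕ :=
  sSup {n | ∃ S : Finset V, ↑S ⊆ X ∧ G.IsIndepSetOn ↑S ∧ S.card = n}

/-- `(T, X)` is a tree decomposition of `G`. -/
structure IsTreeDecompOn {ι : Type*} (G : SimpleGraph V) (T : SimpleGraph ι) (X : ι → Set V) :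
    Prop where
  isTree : T.IsTree
  exists_bag : ∀ v : V, ∃ t, v ∈ X t
  exists_bag_edge : ∀ ⦃u v : V⦄, G.Adj u v → ∃ t, u ∈ X t ∧ v ∈ X t
  subtree_connected : ∀ v : V, (T.induce {t | v ∈ X t}).Connected

/-- The independence number of a tree decomposition with bags `X`. -/
noncomputable def decompIndepNum {ι : Type*} (G : SimpleGraph V) (X : ι → Set V) : ℕ :=
  ⨆ t, indepNumOn G (X t)

/-- The tree-independence number: the minimum independence number over all tree decompositions. -/
noncomputable def treeIndepNum (G : SimpleGraph V) : ℕ :=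
  sInf {n | ∃ (ι : Type) (T : SimpleGraph ι) (X : ι → Set V),
    Finite ι ∧ IsTreeDecompOn G T X ∧ decompIndepNum G X = n}

/-- The graph `G(ℋ)` on the index set of a family of (vertex sets of) subgraphs of `G`:
two distinct indices are adjacent iff the subgraphs share a vertex or are joined by an edge. -/
def packingGraph {J : Type*} (G : SimpleGraph V) (S : J → Set V) : SimpleGraph J where
  Adj i j := i ≠ j ∧ ((S i ∩ S j).Nonempty ∨ ∃ u ∈ S i, ∃ v ∈ S j, G.Adj u v)
  symm := by
    constructor
    rintro i j ⟨hne, h⟩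
    refine ⟨hne.symm, ?_⟩
    rcases h with ⟨x, hx⟩ | ⟨u, hu, v, hv, huv⟩
    · exact Or.inl ⟨x, hx.2, hx.1⟩
    · exact Or.inr ⟨v, hv, u, hu, huv.symm⟩
  loopless := ⟨fun i h => h.1 rfl⟩

/-- A graph is chordal if it has no induced cycle of length at least four. -/
def IsChordal (G : SimpleGraph V) : Prop :=
  ∀ n : ℕ, 4 ≤ n → ∀ s : Set V, IsEmpty (G.induce s ≃g cycleGraph n)

/-! Write `k = 2r + 1` and replace every bag of an optimal tree decomposition of `G` by its
closed `r`-neighbourhood. This is a tree decomposition of `G ^ k`: the bags whose neighbourhood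
contains `v` are those meeting the `r`-ball around `v`, which stay connected in the tree because
shortest paths from `v` remain in the ball; and a path of length at most `2r + 1` has a middle edge
whose ends lie within distance `r` of its two endpoints. Sending each vertex of an independent set
of `G ^ k` inside a thickened bag to a vertex of the original bag at distance at most `r` gives an
independent set of `G` of the same size, since two images that coincide or are adjacent would put
their preimages at distance at most `2r + 1`. -/

namespace SimpleGraph

variable {G : SimpleGraph V}

theorem power_adj_iff {k : ℕ} {u v : V} : (G.power k).Adj u v ↔ u ≠ v ∧ G.edist u v ≤ k := by
  refine and_congr_right fun _ => ⟨fun ⟨hr, hd⟩ => ?_, fun h => ?_⟩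
  · rw [← hr.coe_dist_eq_edist]
    exact_mod_cast hd
  · have hr : G.Reachable u v := edist_ne_top_iff_reachable.mp (ne_top_of_le_ne_top (by simp) h)
    rw [← hr.coe_dist_eq_edist] at h
    exact ⟨hr, by exact_mod_cast h⟩

theorem power_adj_of_edist_le {r : ℕ} {v a b w : V} (hvw : v ≠ w) (hva : G.edist v a ≤ r)
    (hab : G.edist a b ≤ 1) (hbw : G.edist b w ≤ r) : (G.power (2 * r + 1)).Adj v w := by
  refine power_adj_iff.mpr ⟨hvw, ?_⟩
  calc G.edist v w ≤ G.edist v a + G.edist a b + G.edist b w :=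
        G.edist_triangle.trans (by gcongr; exact G.edist_triangle)
    _ ≤ r + 1 + r := by gcongr
    _ = ↑(2 * r + 1) := by push_cast; ring

theorem Walk.edist_getVert_le {u v : V} (p : G.Walk u v) (n : ℕ) :
    G.edist u (p.getVert n) ≤ n :=
  (G.edist_le (p.take n)).trans (by simp)

theorem Walk.edist_getVert_le_length_sub {u v : V} (p : G.Walk u v) (n : ℕ) :
    G.edist (p.getVert n) v ≤ ↑(p.length - n) :=
  (G.edist_le (p.drop n)).trans (by simp)

def cthickening (G : SimpleGraph V) (r : ℕ) (S : Set V) : Set V :=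
  {v | ∃ u ∈ S, G.edist v u ≤ r}

theorem subset_cthickening (r : ℕ) (S : Set V) : S ⊆ G.cthickening r S :=
  fun v hv => ⟨v, hv, by simp⟩

theorem le_indepNumOn [Finite V] {X : Set V} {S : Finset V} (hSX : ↑S ⊆ X)
    (hS : G.IsIndepSetOn S) : S.card ≤ indepNumOn G X := by
  refine le_csSup ⟨Nat.card V, ?_⟩ ⟨S, hSX, hS, rfl⟩
  rintro n ⟨S, -, -, rfl⟩
  have := Fintype.ofFinite V
  simpa [Nat.card_eq_fintype_card] using S.card_le_univ

theorem indepNumOn_le {X : Set V} {n : ℕ}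
    (h : ∀ S : Finset V, ↑S ⊆ X → G.IsIndepSetOn S → S.card ≤ n) : indepNumOn G X ≤ n :=
  csSup_le ⟨0, ∅, by simp, by simp [IsIndepSetOn], rfl⟩ fun _ ⟨S, hSX, hS, hcard⟩ =>
    hcard ▸ h S hSX hS

theorem indepNumOn_power_cthickening_le [Finite V] (r : ℕ) (X : Set V) :
    indepNumOn (G.power (2 * r + 1)) (G.cthickening r X) ≤ indepNumOn G X := by
  classical
  choose! f hfX hfd using fun v (hv : v ∈ G.cthickening r X) => hv
  refine indepNumOn_le fun S hSX hS => ?_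
  have far : ∀ v ∈ S, ∀ w ∈ S, v ≠ w → ¬ G.edist (f v) (f w) ≤ 1 := fun v hv w hw hvw h =>
    hS hv hw hvw <| power_adj_of_edist_le hvw (hfd v (hSX hv)) h
      (by rw [edist_comm]; exact hfd w (hSX hw))
  have hinj : Set.InjOn f S := fun v hv w hw hfvw => by_contra fun hvw =>
    far v hv w hw hvw (by simp [hfvw])
  rw [← Finset.card_image_of_injOn hinj]
  refine le_indepNumOn ?_ ?_ <;> rw [Finset.coe_image]
  · exact Set.image_subset_iff.mpr fun v hv => hfX v (hSX hv)
  rintro _ ⟨v, hv, rfl⟩ _ ⟨w, hw, rfl⟩ hne hadj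
  exact far v hv w hw (fun h => hne (h ▸ rfl)) (edist_le_one_iff_adj_or_eq.mpr (Or.inl hadj))

end SimpleGraph

namespace IsTreeDecompOn

variable {ι : Type*} {G : SimpleGraph V} {T : SimpleGraph ι} {X : ι → Set V}

theorem reachable_induce_of_mem (hTX : IsTreeDecompOn G T X) {S : Set ι} {a : V}
    (ha : ∀ s, a ∈ X s → s ∈ S) {s s' : ι} (hs : a ∈ X s) (hs' : a ∈ X s') :
    (T.induce S).Reachable ⟨s, ha s hs⟩ ⟨s', ha s' hs'⟩ :=
  ((hTX.subtree_connected a).preconnected ⟨s, hs⟩ ⟨s', hs'⟩).map (T.induceHomOfLE ha).toHom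

theorem reachable_induce_of_walk (hTX : IsTreeDecompOn G T X) {S : Set ι} {a b : V}
    (p : G.Walk a b) (hp : ∀ w ∈ p.support, ∀ s, w ∈ X s → s ∈ S) {s s' : ι}
    (hs : a ∈ X s) (hs' : b ∈ X s') :
    (T.induce S).Reachable ⟨s, hp a p.start_mem_support s hs⟩
      ⟨s', hp b p.end_mem_support s' hs'⟩ := by
  induction p generalizing s with
  | @nil a => exact hTX.reachable_induce_of_mem _ hs hs'
  | @cons a c b hac q ih =>
    obtain ⟨t, hat, hct⟩ := hTX.exists_bag_edge hac
    exact (hTX.reachable_induce_of_mem _ hs hat).trans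
      (ih (fun w hw => hp w (by simp [hw])) hct hs')

theorem exists_bag_power_cthickening (hTX : IsTreeDecompOn G T X) {r : ℕ} {u v : V}
    (huv : (G.power (2 * r + 1)).Adj u v) :
    ∃ t, u ∈ G.cthickening r (X t) ∧ v ∈ G.cthickening r (X t) := by
  obtain ⟨-, hreach, hdist⟩ := huv
  obtain ⟨p, hp⟩ := hreach.exists_walk_length_eq_dist
  rcases le_or_gt p.length r with hshort | hlong
  · obtain ⟨t, hut⟩ := hTX.exists_bag u
    refine ⟨t, G.subset_cthickening r _ hut, u, hut, ?_⟩
    calc G.edist v u ≤ p.reverse.length := G.edist_le _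
      _ ≤ r := by simpa using hshort
  · obtain ⟨t, hrt, hrt'⟩ := hTX.exists_bag_edge (p.adj_getVert_succ hlong)
    refine ⟨t, ⟨_, hrt, p.edist_getVert_le r⟩, ⟨_, hrt', ?_⟩⟩
    rw [SimpleGraph.edist_comm]
    exact (p.edist_getVert_le_length_sub (r + 1)).trans (by norm_cast; omega)

theorem induce_cthickening_connected (hTX : IsTreeDecompOn G T X) (r : ℕ) (v : V) :
    (T.induce {t | v ∈ G.cthickening r (X t)}).Connected := by
  classical
  obtain ⟨t₀, hvt₀⟩ := hTX.exists_bag v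
  have hv : ∀ t, v ∈ X t → v ∈ G.cthickening r (X t) := fun t => (G.subset_cthickening r _ ·)
  have hreach : ∀ t (ht : v ∈ G.cthickening r (X t)),
      (T.induce {t | v ∈ G.cthickening r (X t)}).Reachable ⟨t₀, hv t₀ hvt₀⟩ ⟨t, ht⟩ := by
    rintro t ⟨u, hut, hvu⟩
    obtain ⟨p, hp⟩ := (G.edist_ne_top_iff_reachable.mp
      (ne_top_of_le_ne_top (by simp) hvu)).exists_walk_length_eq_edist
    refine hTX.reachable_induce_of_walk (S := {t | v ∈ G.cthickening r (X t)}) p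
      (fun w hw s hws => ⟨w, hws, ?_⟩) hvt₀ hut
    calc G.edist v w ≤ (p.takeUntil w hw).length := G.edist_le _
      _ ≤ p.length := by exact_mod_cast p.length_takeUntil_le_length hw
      _ ≤ r := hp ▸ hvu
  exact (connected_iff _).mpr ⟨fun ⟨t, ht⟩ ⟨t', ht'⟩ => (hreach t ht).symm.trans (hreach t' ht'),
    ⟨⟨t₀, hv t₀ hvt₀⟩⟩⟩

theorem power_cthickening (hTX : IsTreeDecompOn G T X) (r : ℕ) :
    IsTreeDecompOn (G.power (2 * r + 1)) T fun t => G.cthickening r (X t) where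
  isTree := hTX.isTree
  exists_bag v := (hTX.exists_bag v).imp fun _ => (G.subset_cthickening r _ ·)
  exists_bag_edge _ _ := hTX.exists_bag_power_cthickening
  subtree_connected := hTX.induce_cthickening_connected r

end IsTreeDecompOn

section treeIndepNum

variable {G : SimpleGraph V}

theorem isTreeDecompOn_univ : IsTreeDecompOn G (⊥ : SimpleGraph Unit) fun _ => Set.univ where
  isTree := ⟨(connected_iff_exists_forall_reachable _).mpr ⟨(), fun _ => .refl _⟩, isAcyclic_bot⟩
  exists_bag _ := ⟨(), trivial⟩
  exists_bag_edge _ _ _ := ⟨(), trivial, trivial⟩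
  subtree_connected _ :=
    (connected_iff_exists_forall_reachable _).mpr ⟨⟨(), trivial⟩, fun _ => .refl _⟩

theorem treeIndepNum_le_decompIndepNum {ι : Type} [Finite ι] {T : SimpleGraph ι} {X : ι → Set V}
    (hTX : IsTreeDecompOn G T X) : treeIndepNum G ≤ decompIndepNum G X :=
  Nat.sInf_le ⟨ι, T, X, ‹_›, hTX, rfl⟩

theorem exists_decompIndepNum_eq_treeIndepNum (G : SimpleGraph V) :
    ∃ (ι : Type) (T : SimpleGraph ι) (X : ι → Set V),
      Finite ι ∧ IsTreeDecompOn G T X ∧ decompIndepNum G X = treeIndepNum G := by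
  refine Nat.sInf_mem (s := {n | ∃ (ι : Type) (T : SimpleGraph ι) (X : ι → Set V),
    Finite ι ∧ IsTreeDecompOn G T X ∧ decompIndepNum G X = n}) ?_
  exact ⟨_, Unit, ⊥, _, inferInstance, isTreeDecompOn_univ, rfl⟩

theorem decompIndepNum_power_cthickening_le [Finite V] {ι : Type*} [Finite ι] (r : ℕ)
    (X : ι → Set V) :
    decompIndepNum (G.power (2 * r + 1)) (fun t => G.cthickening r (X t)) ≤ decompIndepNum G X :=
  ciSup_mono (Set.finite_range _).bddAbove fun t => G.indepNumOn_power_cthickening_le r (X t)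

end treeIndepNum

theorem stmt_3_general {V : Type*} [Fintype V] (G : SimpleGraph V) (k : ℕ)
    (hodd : Odd k) :
    treeIndepNum (G.power k) ≤ treeIndepNum G := by
  obtain ⟨r, rfl⟩ := hodd
  obtain ⟨ι, T, X, hι, hTX, hX⟩ := exists_decompIndepNum_eq_treeIndepNum G
  calc treeIndepNum (G.power (2 * r + 1))
      _ ≤ decompIndepNum (G.power (2 * r + 1)) (fun t => G.cthickening r (X t)) :=
        treeIndepNum_le_decompIndepNum (hTX.power_cthickening r)
      _ ≤ decompIndepNum G X := decompIndepNum_power_cthickening_le r X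
      _ = treeIndepNum G := hX

theorem stmt_3 {V : Type*} [Fintype V] (G : SimpleGraph V) (k : ℕ)
    (hk : 0 < k) (hodd : Odd k) :
    treeIndepNum (G.power k) ≤ treeIndepNum G :=
  stmt_3_general G k hodd
end

section
/- Let C be a finite cycle graph and let ℱ be a finite family of connected non-null subgraphs of C. Let G be the intersection graph of ℱ, i.e., the graph whose vertices are the members of ℱ, with two distinct members adjacent if and only if they share a vertex of C. Then tree-α(G) ≤ 2. -/
open SimpleGraph

variable {V : Type*}

/-- The intersection graph of a family of (vertex sets of) subgraphs. -/
def intersectionGraph {V J : Type*} (S : J → Set V) : SimpleGraph J where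
  Adj i j := i ≠ j ∧ (S i ∩ S j).Nonempty
  symm := by
    constructor
    rintro i j ⟨h1, x, hx1, hx2⟩
    exact ⟨h1.symm, x, hx2, hx1⟩
  loopless := ⟨fun i h => h.1 rfl⟩

/-!
Cut the cycle open at the vertex `0`, turning it into a path `P`, and replace every arc that
contains `0` by the whole of `P`. The enlarged arcs are subpaths of `P`, so the bags
`{arcs containing t}`, `t ∈ P`, form a path decomposition of their intersection graph, hence of
the original one. Every member of the bag at `t` contains `t` or `0`, so the bag is covered by
two cliques and has independence number at most `2`.
-/

theorem Fin.val_add_one_eq_of_val_sub_eq_one {n : ℕ} [NeZero n] {x y : Fin n} (hx : x ≠ 0)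
    (h : (x - y).val = 1) : y.val + 1 = x.val := by
  have hx' : (x : ℕ) ≠ 0 := fun h => hx (Fin.ext (by simp [h]))
  rcases le_or_gt y x with hyx | hxy
  · rw [Fin.coe_sub_iff_le.2 hyx] at h
    omega
  · rw [Fin.coe_sub_iff_lt.2 hxy] at h
    have := y.isLt
    omega

namespace SimpleGraph

theorem Reachable.iff_of_forall_adj {G : SimpleGraph V} {p : V → Prop}
    (hp : ∀ a b, G.Adj a b → (p a ↔ p b)) {a b : V} (h : G.Reachable a b) : p a ↔ p b := by
  obtain ⟨w⟩ := h
  induction w with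
  | nil => rfl
  | cons h _ ih => exact (hp _ _ h).trans ih

theorem pathGraph_isAcyclic (n : ℕ) : (pathGraph n).IsAcyclic := by
  refine isAcyclic_iff_forall_adj_isBridge.2 fun u v huv => ?_
  wlog h : u.val + 1 = v.val generalizing u v
  · rw [Sym2.eq_swap]
    exact this v u huv.symm (by rw [pathGraph_adj] at huv; omega)
  rw [isBridge_iff]
  intro hr
  -- after deleting `s(u, v)` no edge joins `{a | a ≤ u}` to its complement
  have hcut : ∀ a b, ((pathGraph n).deleteEdges {s(u, v)}).Adj a b →
      ((a : ℕ) ≤ u ↔ (b : ℕ) ≤ u) := by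
    intro a b hab
    rw [deleteEdges_adj, pathGraph_adj, Set.mem_singleton_iff] at hab
    obtain ⟨hab, hne⟩ := hab
    have h1 : ¬ (a = u ∧ b = v) := by rintro ⟨rfl, rfl⟩; exact hne rfl
    have h2 : ¬ (a = v ∧ b = u) := by rintro ⟨rfl, rfl⟩; exact hne Sym2.eq_swap
    simp only [Fin.ext_iff] at h1 h2
    omega
  have := hr.iff_of_forall_adj hcut
  simp only [le_refl, true_iff] at this
  omega

theorem pathGraph_isTree (n : ℕ) [NeZero n] : (pathGraph n).IsTree := by
  obtain ⟨m, rfl⟩ := Nat.exists_eq_succ_of_ne_zero (NeZero.ne n)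
  exact ⟨pathGraph_connected m, pathGraph_isAcyclic _⟩

theorem pathGraph_adj_of_cycleGraph_adj {n : ℕ} [NeZero n] {a b : Fin n} (ha : a ≠ 0)
    (hb : b ≠ 0) (h : (cycleGraph n).Adj a b) : (pathGraph n).Adj a b := by
  rw [cycleGraph_adj'] at h
  rw [pathGraph_adj]
  rcases h with h | h
  · exact Or.inr (Fin.val_add_one_eq_of_val_sub_eq_one ha h)
  · exact Or.inl (Fin.val_add_one_eq_of_val_sub_eq_one hb h)

theorem Subgraph.Connected.induce_of_adj {G : SimpleGraph V} {H : G.Subgraph}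
    (hH : H.Connected) {G' : SimpleGraph V}
    (hG' : ∀ a ∈ H.verts, ∀ b ∈ H.verts, G.Adj a b → G'.Adj a b) :
    (G'.induce H.verts).Connected :=
  hH.coe.map ⟨fun x => x, fun {x y} hxy => hG' _ x.2 _ y.2 (H.adj_sub hxy)⟩ fun x => ⟨x, rfl⟩

theorem Connected.induce_univ {G : SimpleGraph V} (hG : G.Connected) :
    (G.induce Set.univ).Connected :=
  hG.map (induceUnivIso G).symm.toHom (induceUnivIso G).symm.surjective

end SimpleGraph

open SimpleGraph

theorem intersectionGraph_mono {J : Type*} {S S' : J → Set V} (h : ∀ j, S j ⊆ S' j) :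
    intersectionGraph S ≤ intersectionGraph S' :=
  fun _ _ ⟨hne, x, hx, hx'⟩ => ⟨hne, x, h _ hx, h _ hx'⟩

theorem isClique_intersectionGraph_setOf_mem {J : Type*} (S : J → Set V) (x : V) :
    (intersectionGraph S).IsClique {j | x ∈ S j} :=
  fun _ hi _ hj hne => ⟨hne, x, hi, hj⟩

theorem IsTreeDecompOn.mono {ι : Type*} {G H : SimpleGraph V} {T : SimpleGraph ι} {X : ι → Set V}
    (h : IsTreeDecompOn H T X) (hGH : G ≤ H) : IsTreeDecompOn G T X where
  isTree := h.isTree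
  exists_bag := h.exists_bag
  exists_bag_edge _ _ huv := h.exists_bag_edge (hGH huv)
  subtree_connected := h.subtree_connected

theorem isTreeDecompOn_intersectionGraph {ι J : Type*} {T : SimpleGraph ι} (hT : T.IsTree)
    {S : J → Set ι} (hS : ∀ j, (T.induce (S j)).Connected) :
    IsTreeDecompOn (intersectionGraph S) T fun t => {j | t ∈ S j} where
  isTree := hT
  exists_bag j := (hS j).nonempty.elim fun ⟨t, ht⟩ => ⟨t, ht⟩
  exists_bag_edge _ _ h := let ⟨t, ht⟩ := h.2; ⟨t, ht⟩
  subtree_connected := hS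

theorem indepNumOn_le_card_of_forall_mem_isClique {κ : Type*} {G : SimpleGraph V} {X : Set V}
    (P : Finset κ) (C : κ → Set V) (hC : ∀ i ∈ P, G.IsClique (C i))
    (hX : ∀ v ∈ X, ∃ i ∈ P, v ∈ C i) : indepNumOn G X ≤ P.card := by
  refine csSup_le' ?_
  rintro _ ⟨S, hSX, hS, rfl⟩
  refine Finset.card_le_card_of_forall_subsingleton (fun v i => v ∈ C i)
    (fun v hv => hX v (hSX hv)) fun i hi u ⟨hu, hui⟩ v ⟨hv, hvi⟩ => ?_
  by_contra hne
  exact hS hu hv hne (hC i hi hui hvi hne)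

theorem treeIndepNum_le_of_isTreeDecompOn {ι : Type} [Finite ι] {G : SimpleGraph V}
    {T : SimpleGraph ι} {X : ι → Set V} (h : IsTreeDecompOn G T X) {k : ℕ}
    (hk : ∀ t, indepNumOn G (X t) ≤ k) : treeIndepNum G ≤ k :=
  calc treeIndepNum G ≤ decompIndepNum G X := Nat.sInf_le ⟨ι, T, X, inferInstance, h, rfl⟩
    _ ≤ k := ciSup_le' hk

theorem stmt_11_general {J : Type*} (n : ℕ) (hn : 3 ≤ n)
    (F : J → (cycleGraph n).Subgraph) (hF : ∀ j, (F j).Connected) :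
    treeIndepNum (intersectionGraph fun j => (F j).verts) ≤ 2 := by
  have : NeZero n := ⟨by omega⟩
  let S : J → Set (Fin n) := fun j => {t | t ∈ (F j).verts ∨ 0 ∈ (F j).verts}
  have hS : ∀ j, ((pathGraph n).induce (S j)).Connected := by
    intro j
    by_cases h0 : 0 ∈ (F j).verts
    · rw [show S j = Set.univ from Set.eq_univ_of_forall fun _ => Or.inr h0]
      exact (pathGraph_isTree n).connected.induce_univ
    · rw [show S j = (F j).verts from Set.ext fun _ => or_iff_left h0]
      exact (hF j).induce_of_adj fun a ha b hb => pathGraph_adj_of_cycleGraph_adj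
        (ne_of_mem_of_not_mem ha h0) (ne_of_mem_of_not_mem hb h0)
  have hdec := (isTreeDecompOn_intersectionGraph (pathGraph_isTree n) hS).mono
    (intersectionGraph_mono fun _ _ => Or.inl)
  refine treeIndepNum_le_of_isTreeDecompOn hdec fun t => ?_
  refine (indepNumOn_le_card_of_forall_mem_isClique {t, 0} (fun x => {j | x ∈ (F j).verts})
    (fun x _ => isClique_intersectionGraph_setOf_mem _ x) fun j hj => ?_).trans Finset.card_le_two
  rcases hj with ht | h0
  · exact ⟨t, by simp, ht⟩
  · exact ⟨0, by simp, h0⟩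

theorem stmt_11 {J : Type*} [Finite J] (n : ℕ) (hn : 3 ≤ n)
    (F : J → (cycleGraph n).Subgraph) (hF : ∀ j, (F j).Connected) :
    treeIndepNum (intersectionGraph fun j => (F j).verts) ≤ 2 :=
  stmt_11_general n hn F hF
end
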